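/- arXiv:2105.02846 — 2 statements merged into one kernel-verified Lean document; each statement's English description precedes it below -/
import Mathlib

section
/- Let j ∈ ℕ and m = E ξ ∈ (0,∞). Then U_j(t) ≥ t^j/(j! m^j) for all t ≥ 0, where U_j = U^{*(j)} is the j-fold Lebesgue–Stieltjes convolution of the renewal function U with itself. -/
open MeasureTheory ProbabilityTheory Filter Topology Set Asymptotics
open scoped ENNReal NNReal

noncomputable section

namespace IPRW

variable {Ω : Type*} [MeasurableSpace Ω]

/-- Partial sums `S i = ξ₁ + ⋯ + ξ_i` (with 0-indexed increments `ξ 0, ξ 1, …`). -/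
def S (ξ : ℕ → Ω → ℝ) (i : ℕ) (ω : Ω) : ℝ := ∑ k ∈ Finset.range i, ξ k ω

/-- Points of the perturbed random walk: `T i = S i + η i` models `T_{i+1} = S_i + η_{i+1}`. -/
def T (ξ η : ℕ → Ω → ℝ) (i : ℕ) (ω : Ω) : ℝ := S ξ i ω + η i ω

/-- `N(t)`, the number of points of the perturbed random walk in `(-∞, t]`. -/
def Ncount (ξ η : ℕ → Ω → ℝ) (t : ℝ) (ω : Ω) : ℝ≥0∞ :=
  ∑' i : ℕ, Set.indicator {ω' | T ξ η i ω' ≤ t} (1 : Ω → ℝ≥0∞) ω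

/-- `V(t) = E N(t)` for `t ≥ 0`, and `V(t) = 0` for `t < 0`. -/
def Vfun (μ : Measure Ω) (ξ η : ℕ → Ω → ℝ) (t : ℝ) : ℝ :=
  if 0 ≤ t then (∫⁻ ω, Ncount ξ η t ω ∂μ).toReal else 0

/-- The Lebesgue–Stieltjes measure `dV` of `V`: the intensity measure of the point
process `(T_i)_{i≥1}`. -/
def intensity (μ : Measure Ω) (ξ η : ℕ → Ω → ℝ) : Measure ℝ :=
  Measure.sum fun i : ℕ => Measure.map (T ξ η i) μ

/-- Convolution of two measures on `ℝ`. -/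
def mconv (κ ν : Measure ℝ) : Measure ℝ :=
  Measure.map (fun p : ℝ × ℝ => p.1 + p.2) (κ.prod ν)

/-- `j`-fold convolution power of a measure on `ℝ` (the 0-th power is `δ₀`). -/
def convPow (ν : Measure ℝ) : ℕ → Measure ℝ
  | 0 => Measure.dirac 0
  | n + 1 => mconv (convPow ν n) ν

/-- `V_j(t) = V^{*(j)}(t)`, the `j`-fold Lebesgue–Stieltjes convolution of `V` with itself
(so `V_0 = 1_{[0,∞)}` and `V_j(t) = ∫_{[0,t]} V_{j-1}(t-y) dV(y)`). -/
def Vj (μ : Measure Ω) (ξ η : ℕ → Ω → ℝ) (j : ℕ) (t : ℝ) : ℝ :=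
  (convPow (intensity μ ξ η) j (Icc 0 t)).toReal

/-- `(ξ_i, η_i)_{i∈ℕ}` are i.i.d. copies of the random vector `(ξ, η)`
(measurable, independent, identically distributed). -/
def IIDpairs (μ : Measure Ω) (ξ η : ℕ → Ω → ℝ) : Prop :=
  (∀ i, Measurable (ξ i)) ∧ (∀ i, Measurable (η i)) ∧
  iIndepFun (fun i ω => (ξ i ω, η i ω)) μ ∧
  ∀ i, IdentDistrib (fun ω => (ξ i ω, η i ω)) (fun ω => (ξ 0 ω, η 0 ω)) μ μ

/-- The distribution of a positive random variable `X` is nonlattice if it is not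
concentrated on any lattice `{n d : n ∈ ℕ₀}`, `d > 0`. -/
def Nonlattice (μ : Measure Ω) (X : Ω → ℝ) : Prop :=
  ∀ d : ℝ, 0 < d → μ {ω | ∃ n : ℕ, X ω = (n : ℝ) * d} ≠ 1

/-- Birth time of the individual `v` in the general branching process generated by the
perturbed random walk.  A node is encoded as a list of 0-based child indices, so an entry
`n` stands for the `(n+1)`-th child; the shift of the `(n+1)`-th child of `u` relative to
`u` is `ξ_{u,1} + ⋯ + ξ_{u,n} + η_{u,n+1}`. -/
def birthP (ξ η : List ℕ → Ω → ℝ) (v : List ℕ) (ω : Ω) : ℝ :=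
  ∑ k ∈ Finset.range v.length,
    ((∑ i ∈ Finset.range (v.getD k 0), ξ (v.take k ++ [i]) ω) + η (v.take (k + 1)) ω)

/-- Birth time of the individual `v` in the general branching process generated by the
standard random walk (the case `η = ξ` a.s.): the shift of the `(n+1)`-th child of `u`
relative to `u` is `ξ_{u,1} + ⋯ + ξ_{u,n+1}`. -/
def birthStd (ξ : List ℕ → Ω → ℝ) (v : List ℕ) (ω : Ω) : ℝ :=
  ∑ k ∈ Finset.range v.length,
    ∑ i ∈ Finset.range (v.getD k 0 + 1), ξ (v.take k ++ [i]) ω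

/-- `N_j(t)`: the number of `j`-th generation individuals with birth times `≤ t`. -/
def NgenP (ξ η : List ℕ → Ω → ℝ) (j : ℕ) (t : ℝ) (ω : Ω) : ℝ≥0∞ :=
  ∑' v : {v : List ℕ // v.length = j},
    Set.indicator {ω' | birthP ξ η v.1 ω' ≤ t} (1 : Ω → ℝ≥0∞) ω

/-- `N_j(t)` for the branching process generated by the standard random walk. -/
def NgenStd (ξ : List ℕ → Ω → ℝ) (j : ℕ) (t : ℝ) (ω : Ω) : ℝ≥0∞ :=
  ∑' v : {v : List ℕ // v.length = j},
    Set.indicator {ω' | birthStd ξ v.1 ω' ≤ t} (1 : Ω → ℝ≥0∞) ω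

/-- The family `((ξ_v, η_v))`, indexed by finite sequences of positive integers,
is i.i.d. -/
def IIDfam (μ : Measure Ω) (ξ η : List ℕ → Ω → ℝ) : Prop :=
  (∀ v, Measurable (ξ v)) ∧ (∀ v, Measurable (η v)) ∧
  iIndepFun (fun v ω => (ξ v ω, η v ω)) μ ∧
  ∀ v, IdentDistrib (fun ω => (ξ v ω, η v ω)) (fun ω => (ξ [] ω, η [] ω)) μ μ

/-- The family `(ξ_v)`, indexed by finite sequences of positive integers, is i.i.d. -/
def IIDfam1 (μ : Measure Ω) (ξ : List ℕ → Ω → ℝ) : Prop :=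
  (∀ v, Measurable (ξ v)) ∧
  iIndepFun (fun v ω => ξ v ω) μ ∧
  ∀ v, IdentDistrib (ξ v) (ξ []) μ μ

/-- The measure `dŨ`, where `Ũ(t) = ∑_{r≥1} P(S_r ≤ t)`. -/
def Utilde (μ : Measure Ω) (ξ : ℕ → Ω → ℝ) : Measure ℝ :=
  Measure.sum fun r : ℕ => Measure.map (S ξ (r + 1)) μ

/-- The measure `dU`, where `U(t) = ∑_{n≥0} P(S_n ≤ t)` is the renewal function. -/
def Ufull (μ : Measure Ω) (ξ : ℕ → Ω → ℝ) : Measure ℝ :=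
  Measure.sum fun n : ℕ => Measure.map (S ξ n) μ

/-- `V_j = Ũ_j`, the `j`-fold Lebesgue–Stieltjes convolution of `Ũ` with itself. -/
def VjU (μ : Measure Ω) (ξ : ℕ → Ω → ℝ) (j : ℕ) (t : ℝ) : ℝ :=
  (convPow (Utilde μ ξ) j (Icc 0 t)).toReal

/-- First passage time `ν(t) = inf{k ∈ ℕ, k ≥ 1 : S_k > t}`. -/
def nu (ξ : ℕ → Ω → ℝ) (t : ℝ) (ω : Ω) : ℕ := sInf {k : ℕ | 1 ≤ k ∧ t < S ξ k ω}

/-- `G`, the distribution function of `η` (with `G(t) = 0` for `t < 0`). -/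
def Gfun (μ : Measure Ω) (η0 : Ω → ℝ) (t : ℝ) : ℝ :=
  if 0 ≤ t then (μ {ω | η0 ω ≤ t}).toReal else 0

/-- `a(t) = ∑_{k=0}^{⌊t⌋+1} (1 - G(k))`. -/
def aSum (μ : Measure Ω) (η0 : Ω → ℝ) (t : ℝ) : ℝ :=
  ∑ k ∈ Finset.range (⌊t⌋₊ + 2), (1 - Gfun μ η0 (k : ℝ))

/-- `Z_t(u) = ∑_{k≥0} (1_{{S_k + η_{k+1} ≤ ut}} - G(ut - S_k)) 1_{{S_k ≤ ut}}`. -/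
def Zfun (μ : Measure Ω) (ξ η : ℕ → Ω → ℝ) (t u : ℝ) (ω : Ω) : ℝ :=
  ∑' k : ℕ,
    (Set.indicator {ω' | S ξ k ω' + η k ω' ≤ u * t} (1 : Ω → ℝ) ω
        - Gfun μ (η 0) (u * t - S ξ k ω))
      * Set.indicator {ω' | S ξ k ω' ≤ u * t} (1 : Ω → ℝ) ω

/-- Upper Riemann-type sum `h ∑_{n≥0} sup_{y ∈ [nh,(n+1)h)} f(y)`, valued in `ℝ≥0∞`. -/
def upperSum (f : ℝ → ℝ) (h : ℝ) : ℝ≥0∞ :=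
  ENNReal.ofReal h * ∑' n : ℕ, ⨆ y ∈ Ico ((n : ℝ) * h) ((n + 1 : ℝ) * h), ENNReal.ofReal (f y)

/-- Lower Riemann-type sum `h ∑_{n≥0} inf_{y ∈ [nh,(n+1)h)} f(y)`, valued in `ℝ≥0∞`. -/
def lowerSum (f : ℝ → ℝ) (h : ℝ) : ℝ≥0∞ :=
  ENNReal.ofReal h * ∑' n : ℕ, ⨅ y ∈ Ico ((n : ℝ) * h) ((n + 1 : ℝ) * h), ENNReal.ofReal (f y)

/-- A nonnegative `f` is directly Riemann integrable with `∫_0^∞ f(y) dy = I`: for every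
`h > 0` the upper sum is finite, and both the upper and lower sums converge to `I` as
`h → 0+`. -/
def DRIntegrable (f : ℝ → ℝ) (I : ℝ) : Prop :=
  (∀ h : ℝ, 0 < h → upperSum f h ≠ ∞) ∧
  Tendsto (fun h => (upperSum f h).toReal) (𝓝[>] (0 : ℝ)) (𝓝 I) ∧
  Tendsto (fun h => (lowerSum f h).toReal) (𝓝[>] (0 : ℝ)) (𝓝 I)

/-- `(ξ_i)_{i∈ℕ}` are i.i.d. copies of `ξ` (measurable, independent, identically
distributed). -/
def IIDseq (μ : Measure Ω) (ξ : ℕ → Ω → ℝ) : Prop :=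
  (∀ i, Measurable (ξ i)) ∧
  iIndepFun (fun i ω => ξ i ω) μ ∧
  ∀ i, IdentDistrib (ξ i) (ξ 0) μ μ

/-- `V_j(t) = E N_j(t)` for the general branching process (and `0` for `t < 0`). -/
def VgenP (μ : Measure Ω) (ξ η : List ℕ → Ω → ℝ) (j : ℕ) (t : ℝ) : ℝ :=
  if 0 ≤ t then (∫⁻ ω, NgenP ξ η j t ω ∂μ).toReal else 0


/-!
Two properties of the renewal measure `dU` drive the proof. First, `U` grows at least
linearly, `u ≤ m U(u)`: by independence of `S_n` and `ξ_{n+1}`,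
`m U(u) = ∑ₙ E[ξ_{n+1}; S_n < u] = E S_{ν(u)} ≥ u`, where `ν(u)`, the first index with
`S_ν ≥ u`, is finite almost surely. Second, a measure `ν` on `[0, ∞)` with `u ≤ c ν(-∞, u]`
for all `u` satisfies `t^j / j! ≤ c^j ν^{*j}(-∞, t]`: in
`ν^{*(j+1)}(-∞, t] = ∫ ν(-∞, t - x] dν^{*j}(x) ≥ c⁻¹ ∫ (t - x)⁺ dν^{*j}(x)`
the layer-cake formula rewrites the last integral as `∫_0^∞ ν^{*j}(-∞, t - s] ds`, to which the
induction hypothesis applies. Finiteness of `U_j[0, t]` comes from the Chernoff bound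
`P(S_n ≤ u) ≤ e^u (E e^{-ξ})^n`.
-/

section Convolution

variable {κ ν : Measure ℝ}

lemma mconv_Iic [SFinite ν] (t : ℝ) : mconv κ ν (Iic t) = ∫⁻ x, ν (Iic (t - x)) ∂κ := by
  have hadd : Measurable fun p : ℝ × ℝ => p.1 + p.2 := by fun_prop
  rw [mconv, Measure.map_apply hadd measurableSet_Iic, Measure.prod_apply (hadd measurableSet_Iic)]
  congr! with x
  ext y
  simp [le_sub_iff_add_le']

lemma antitone_measure_Iic_sub (ν : Measure ℝ) (t : ℝ) : Antitone fun x => ν (Iic (t - x)) :=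
  fun _ _ hxy => measure_mono (Iic_subset_Iic.2 (by linarith))

lemma mconv_Iio_zero [SFinite ν] (hκ : κ (Iio 0) = 0) (hν : ν (Iio 0) = 0) :
    mconv κ ν (Iio 0) = 0 := by
  have hadd : Measurable fun p : ℝ × ℝ => p.1 + p.2 := by fun_prop
  rw [mconv, Measure.map_apply hadd measurableSet_Iio]
  have hsub : (fun p : ℝ × ℝ => p.1 + p.2) ⁻¹' Iio 0 ⊆ Iio 0 ×ˢ univ ∪ univ ×ˢ Iio 0 := by
    intro p hp
    by_contra! h
    simp only [mem_union, mem_prod, mem_Iio, mem_univ, and_true, true_and, not_or, not_lt] at h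
    exact (not_lt.2 (add_nonneg h.1 h.2)) hp
  refine measure_mono_null hsub (measure_union_null ?_ ?_)
  · rw [Measure.prod_prod, hκ, zero_mul]
  · rw [Measure.prod_prod, hν, mul_zero]

lemma convPow_Iio_zero [SFinite ν] (hν : ν (Iio 0) = 0) : ∀ j, convPow ν j (Iio 0) = 0
  | 0 => by simp [convPow]
  | j + 1 => mconv_Iio_zero (convPow_Iio_zero hν j) hν

lemma mconv_Iic_le [SFinite ν] (hκ : κ (Iio 0) = 0) (hν : ν (Iio 0) = 0) (t : ℝ) :
    mconv κ ν (Iic t) ≤ κ (Iic t) * ν (Iic t) := by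
  rw [mconv_Iic, mul_comm, ← lintegral_indicator_const measurableSet_Iic]
  refine lintegral_mono_ae ?_
  filter_upwards [measure_eq_zero_iff_ae_notMem.1 hκ] with x hx
  rw [mem_Iio, not_lt] at hx
  by_cases hxt : x ≤ t
  · rw [indicator_of_mem (mem_Iic.2 hxt)]
    exact measure_mono (Iic_subset_Iic.2 (by linarith))
  · rw [indicator_of_notMem (by simpa using hxt)]
    exact (measure_mono_null (Iic_subset_Iio.2 (by linarith)) hν).le

lemma convPow_Iic_ne_top [SFinite ν] (hν : ν (Iio 0) = 0) (hfin : ∀ t, ν (Iic t) ≠ ∞) (t : ℝ) :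
    ∀ j, convPow ν j (Iic t) ≠ ∞
  | 0 => measure_ne_top (Measure.dirac 0) _
  | j + 1 => ne_top_of_le_ne_top (ENNReal.mul_ne_top (convPow_Iic_ne_top hν hfin t j) (hfin t))
      (mconv_Iic_le (convPow_Iio_zero hν j) hν t)

lemma lintegral_ofReal_sub_eq_lintegral_Iic (κ : Measure ℝ) (t : ℝ) :
    ∫⁻ x, ENNReal.ofReal (t - x) ∂κ = ∫⁻ s in Ioi 0, κ (Iic (t - s)) := by
  have hmax : ∀ x, ENNReal.ofReal (t - x) = ENNReal.ofReal (max (t - x) 0) := by simp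
  simp_rw [hmax]
  rw [lintegral_eq_lintegral_meas_le (f := fun x => max (t - x) 0) κ
    (ae_of_all _ fun x => le_max_right _ _) (by fun_prop)]
  refine setLIntegral_congr_fun measurableSet_Ioi fun s hs => ?_
  congr 1
  ext x
  simp [not_le.2 (mem_Ioi.1 hs), le_sub_comm]

open Nat in
lemma lintegral_Ioc_ofReal_sub_pow (t : ℝ) (ht : 0 ≤ t) (j : ℕ) :
    ∫⁻ s in Ioc 0 t, ENNReal.ofReal ((t - s) ^ j / j !) =
      ENNReal.ofReal (t ^ (j + 1) / (j + 1)!) := by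
  rw [← ofReal_integral_eq_lintegral_ofReal]
  · rw [← intervalIntegral.integral_of_le ht, intervalIntegral.integral_div,
      intervalIntegral.integral_comp_sub_left (fun s => s ^ j), integral_pow]
    simp [Nat.factorial_succ, div_div]
  · exact Continuous.integrableOn_Ioc (by fun_prop)
  · refine (ae_restrict_iff' measurableSet_Ioc).2 (ae_of_all _ fun s hs => ?_)
    have : 0 ≤ t - s := by linarith [hs.2]
    positivity

open Nat in
lemma ofReal_pow_div_factorial_le_convPow_Iic {ν : Measure ℝ} [SFinite ν] {c : ℝ≥0∞}
    (hν : ∀ u, ENNReal.ofReal u ≤ c * ν (Iic u)) (j : ℕ) {t : ℝ} (ht : 0 ≤ t) :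
    ENNReal.ofReal (t ^ j / j !) ≤ c ^ j * convPow ν j (Iic t) := by
  induction j generalizing t with
  | zero => simp [convPow, ht]
  | succ j ih =>
    set κ := convPow ν j
    calc ENNReal.ofReal (t ^ (j + 1) / (j + 1)!)
        = ∫⁻ s in Ioc 0 t, ENNReal.ofReal ((t - s) ^ j / j !) :=
          (lintegral_Ioc_ofReal_sub_pow t ht j).symm
      _ ≤ ∫⁻ s in Ioc 0 t, c ^ j * κ (Iic (t - s)) :=
          setLIntegral_mono' measurableSet_Ioc fun s hs => ih (by linarith [hs.2])
      _ ≤ ∫⁻ s in Ioi 0, c ^ j * κ (Iic (t - s)) := lintegral_mono_set Ioc_subset_Ioi_self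
      _ = c ^ j * ∫⁻ x, ENNReal.ofReal (t - x) ∂κ := by
          rw [lintegral_const_mul _ (antitone_measure_Iic_sub κ t).measurable,
            lintegral_ofReal_sub_eq_lintegral_Iic]
      _ ≤ c ^ j * ∫⁻ x, c * ν (Iic (t - x)) ∂κ := by gcongr with x; exact hν _
      _ = c ^ (j + 1) * convPow ν (j + 1) (Iic t) := by
          rw [lintegral_const_mul _ (antitone_measure_Iic_sub ν t).measurable, convPow, mconv_Iic,
            pow_succ, mul_assoc]

end Convolution

section Moments

variable {μ : Measure Ω} {X : Ω → ℝ} {t : ℝ}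

lemma integrable_exp_mul_of_nonpos [IsFiniteMeasure μ] (hX : AEMeasurable X μ)
    (hX0 : ∀ᵐ ω ∂μ, 0 ≤ X ω) (ht : t ≤ 0) : Integrable (fun ω => Real.exp (t * X ω)) μ := by
  refine .of_mem_Icc 0 1 (Real.measurable_exp.comp_aemeasurable (hX.const_mul t)) ?_
  filter_upwards [hX0] with ω hω
  exact ⟨(Real.exp_pos _).le, Real.exp_le_one_iff.2 (mul_nonpos_of_nonpos_of_nonneg ht hω)⟩

lemma mgf_lt_one_of_neg [IsProbabilityMeasure μ] (hX : AEMeasurable X μ)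
    (hX0 : ∀ᵐ ω ∂μ, 0 < X ω) (ht : t < 0) : mgf X μ t < 1 := by
  have hint := integrable_exp_mul_of_nonpos hX (hX0.mono fun _ h => h.le) ht.le
  have hlt : ∀ᵐ ω ∂μ, 0 < 1 - Real.exp (t * X ω) := by
    filter_upwards [hX0] with ω hω
    exact sub_pos.2 (Real.exp_lt_one_iff.2 (mul_neg_of_neg_of_pos ht hω))
  have hpos : 0 < ∫ ω, (1 - Real.exp (t * X ω)) ∂μ := by
    rw [integral_pos_iff_support_of_nonneg_ae (hlt.mono fun _ h => h.le)
      ((integrable_const 1).sub hint)]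
    refine pos_iff_ne_zero.2 fun h => ?_
    obtain ⟨ω, hω, hω'⟩ := (hlt.and (measure_eq_zero_iff_ae_notMem.1 h)).exists
    exact hω' hω.ne'
  rw [integral_sub (integrable_const 1) hint, integral_const, probReal_univ, one_smul] at hpos
  exact sub_pos.1 hpos

end Moments

section RandomWalk

variable {μ : Measure Ω} {ξ : ℕ → Ω → ℝ}

lemma S_eq_sum {α : Type*} (ξ : ℕ → α → ℝ) (n : ℕ) : S ξ n = ∑ k ∈ Finset.range n, ξ k := by
  ext ω
  simp [S]

lemma measurable_S (hξ : ∀ i, Measurable (ξ i)) (n : ℕ) : Measurable (S ξ n) :=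
  Finset.measurable_sum _ fun i _ => hξ i

lemma Ufull_apply (hξ : ∀ i, Measurable (ξ i)) {s : Set ℝ} (hs : MeasurableSet s) :
    Ufull μ ξ s = ∑' n, μ (S ξ n ⁻¹' s) := by
  rw [Ufull, Measure.sum_apply _ hs]
  exact tsum_congr fun n => Measure.map_apply (measurable_S hξ n) hs

instance [IsFiniteMeasure μ] : SFinite (Ufull μ ξ) := by
  unfold Ufull
  infer_instance

lemma Ufull_Iio_zero (hξ : ∀ i, Measurable (ξ i)) (hpos : ∀ i, ∀ᵐ ω ∂μ, 0 < ξ i ω) :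
    Ufull μ ξ (Iio 0) = 0 := by
  rw [Ufull_apply hξ measurableSet_Iio, ENNReal.tsum_eq_zero]
  intro n
  refine measure_eq_zero_iff_ae_notMem.2 ?_
  filter_upwards [ae_all_iff.2 hpos] with ω hω
  simpa [S] using Finset.sum_nonneg fun i _ => (hω i).le

lemma measureReal_S_le_le_exp_mul_mgf [IsProbabilityMeasure μ] (hiid : IIDseq μ ξ)
    (hpos : ∀ i, ∀ᵐ ω ∂μ, 0 < ξ i ω) (u : ℝ) (n : ℕ) :
    μ.real {ω | S ξ n ω ≤ u} ≤ Real.exp u * mgf (ξ 0) μ (-1) ^ n := by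
  obtain ⟨hξ, hindep, hid⟩ := hiid
  have hmgf : mgf (S ξ n) μ (-1) = mgf (ξ 0) μ (-1) ^ n := by
    rw [S_eq_sum, hindep.mgf_sum hξ, Finset.prod_eq_pow_card fun i _ =>
      mgf_congr_of_identDistrib _ _ (hid i) _, Finset.card_range]
  have hS0 : ∀ᵐ ω ∂μ, 0 ≤ S ξ n ω := by
    filter_upwards [ae_all_iff.2 hpos] with ω hω
    exact Finset.sum_nonneg fun i _ => (hω i).le
  simpa [hmgf] using measure_le_le_exp_mul_mgf u (neg_nonpos.2 zero_le_one)
    (integrable_exp_mul_of_nonpos (measurable_S hξ n).aemeasurable hS0 (neg_nonpos.2 zero_le_one))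

lemma Ufull_Iic_ne_top [IsProbabilityMeasure μ] (hiid : IIDseq μ ξ)
    (hpos : ∀ i, ∀ᵐ ω ∂μ, 0 < ξ i ω) (u : ℝ) : Ufull μ ξ (Iic u) ≠ ∞ := by
  set ρ := mgf (ξ 0) μ (-1)
  have hρ : ρ < 1 :=
    mgf_lt_one_of_neg (hiid.1 0).aemeasurable (hpos 0) (neg_lt_zero.2 zero_lt_one)
  have hρ0 : 0 ≤ ρ := mgf_nonneg
  have hsum : Summable fun n => Real.exp u * ρ ^ n :=
    (summable_geometric_of_lt_one hρ0 hρ).mul_left _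
  refine ne_top_of_le_ne_top (ENNReal.ofReal_ne_top (r := ∑' n, Real.exp u * ρ ^ n)) ?_
  rw [Ufull_apply hiid.1 measurableSet_Iic,
    ENNReal.ofReal_tsum_of_nonneg (fun n => by positivity) hsum]
  refine ENNReal.tsum_le_tsum fun n => ?_
  rw [← ofReal_measureReal]
  exact ENNReal.ofReal_le_ofReal (measureReal_S_le_le_exp_mul_mgf hiid hpos u n)

end RandomWalk

lemma ofReal_le_tsum_indicator_partialSum_lt_mul {x : ℕ → ℝ} (hx : ∀ k, 0 ≤ x k) {u : ℝ}
    (hu : ∃ n, u ≤ ∑ k ∈ Finset.range n, x k) :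
    ENNReal.ofReal u ≤
      ∑' k, (Iio u).indicator 1 (∑ i ∈ Finset.range k, x i) * ENNReal.ofReal (x k) := by
  classical
  calc ENNReal.ofReal u ≤ ENNReal.ofReal (∑ k ∈ Finset.range (Nat.find hu), x k) :=
        ENNReal.ofReal_le_ofReal (Nat.find_spec hu)
    _ = ∑ k ∈ Finset.range (Nat.find hu),
          (Iio u).indicator 1 (∑ i ∈ Finset.range k, x i) * ENNReal.ofReal (x k) := by
        rw [ENNReal.ofReal_sum_of_nonneg fun k _ => hx k]
        refine Finset.sum_congr rfl fun k hk => ?_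
        have hlt : ∑ i ∈ Finset.range k, x i < u :=
          not_le.1 (Nat.find_min hu (Finset.mem_range.1 hk))
        rw [indicator_of_mem (mem_Iio.2 hlt), Pi.one_apply, one_mul]
    _ ≤ _ := ENNReal.sum_le_tsum _

section Wald

variable {μ : Measure Ω} {ξ : ℕ → Ω → ℝ}

lemma ae_exists_le_S [IsProbabilityMeasure μ] (hiid : IIDseq μ ξ)
    (hpos : ∀ i, ∀ᵐ ω ∂μ, 0 < ξ i ω) (u : ℝ) :
    ∀ᵐ ω ∂μ, ∃ n, u ≤ S ξ n ω := by
  have hfin := Ufull_Iic_ne_top hiid hpos u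
  rw [Ufull_apply hiid.1 measurableSet_Iic] at hfin
  filter_upwards [ae_eventually_notMem hfin] with ω hω
  obtain ⟨n, hn⟩ := hω.exists
  exact ⟨n, le_of_lt (not_le.1 hn)⟩

lemma lintegral_indicator_S_mul_ofReal (hiid : IIDseq μ ξ) (hpos : ∀ i, ∀ᵐ ω ∂μ, 0 < ξ i ω)
    (hm : Integrable (ξ 0) μ) (u : ℝ) (n : ℕ) :
    ∫⁻ ω, (Iio u).indicator 1 (S ξ n ω) * ENNReal.ofReal (ξ n ω) ∂μ
      = μ (S ξ n ⁻¹' Iio u) * ENNReal.ofReal (∫ ω, ξ 0 ω ∂μ) := by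
  obtain ⟨hξ, hindep, hid⟩ := hiid
  have hind : IndepFun (S ξ n) (ξ n) μ := by
    simpa [S_eq_sum] using
      hindep.indepFun_finsetSum_of_notMem hξ (Finset.notMem_range_self (n := n))
  have hone : Measurable ((Iio u).indicator (1 : ℝ → ℝ≥0∞)) :=
    measurable_one.indicator measurableSet_Iio
  rw [lintegral_mul_eq_lintegral_mul_lintegral_of_indepFun''
    (f := fun ω => (Iio u).indicator 1 (S ξ n ω)) (g := fun ω => ENNReal.ofReal (ξ n ω))
    (hone.comp (measurable_S hξ n)).aemeasurable (hξ n).ennreal_ofReal.aemeasurable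
    (hind.comp hone ENNReal.measurable_ofReal)]
  congr 1
  · exact lintegral_indicator_one ((measurable_S hξ n) measurableSet_Iio)
  · exact ((hid n).comp ENNReal.measurable_ofReal).lintegral_eq.trans
      (ofReal_integral_eq_lintegral_ofReal hm ((hpos 0).mono fun _ h => h.le)).symm

lemma ofReal_le_mul_Ufull_Iio [IsProbabilityMeasure μ] (hiid : IIDseq μ ξ)
    (hpos : ∀ i, ∀ᵐ ω ∂μ, 0 < ξ i ω) (hm : Integrable (ξ 0) μ) (u : ℝ) :
    ENNReal.ofReal u ≤ ENNReal.ofReal (∫ ω, ξ 0 ω ∂μ) * Ufull μ ξ (Iio u) := by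
  have hmeas : ∀ n,
      Measurable fun ω => (Iio u).indicator 1 (S ξ n ω) * ENNReal.ofReal (ξ n ω) :=
    fun n => ((measurable_one.indicator measurableSet_Iio).comp (measurable_S hiid.1 n)).mul
      (hiid.1 n).ennreal_ofReal
  calc ENNReal.ofReal u = ∫⁻ _, ENNReal.ofReal u ∂μ := by simp
    _ ≤ ∫⁻ ω, ∑' n, (Iio u).indicator 1 (S ξ n ω) * ENNReal.ofReal (ξ n ω) ∂μ := by
        refine lintegral_mono_ae ?_
        filter_upwards [ae_all_iff.2 hpos, ae_exists_le_S hiid hpos u] with ω hξ hu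
        exact ofReal_le_tsum_indicator_partialSum_lt_mul (fun k => (hξ k).le) hu
    _ = ∑' n, μ (S ξ n ⁻¹' Iio u) * ENNReal.ofReal (∫ ω, ξ 0 ω ∂μ) := by
        rw [lintegral_tsum fun n => (hmeas n).aemeasurable]
        exact tsum_congr (lintegral_indicator_S_mul_ofReal hiid hpos hm u)
    _ = _ := by rw [ENNReal.tsum_mul_right, Ufull_apply hiid.1 measurableSet_Iio, mul_comm]

end Wald

theorem Uj_lower_bound_general
    (μ : Measure Ω) [IsProbabilityMeasure μ] (ξ : ℕ → Ω → ℝ)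
    (hiid : IIDseq μ ξ)
    (hpos : ∀ i, ∀ᵐ ω ∂μ, 0 < ξ i ω)
    (hm : Integrable (ξ 0) μ) (hmpos : 0 < ∫ ω, ξ 0 ω ∂μ)
    (j : ℕ) (t : ℝ) (ht : 0 ≤ t) :
    t ^ j / ((Nat.factorial j : ℝ) * (∫ ω, ξ 0 ω ∂μ) ^ j) ≤
      (convPow (Ufull μ ξ) j (Icc 0 t)).toReal := by
  set m := ∫ ω, ξ 0 ω ∂μ
  have hU0 : Ufull μ ξ (Iio 0) = 0 := Ufull_Iio_zero hiid.1 hpos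
  have hIic : convPow (Ufull μ ξ) j (Iic t) = convPow (Ufull μ ξ) j (Icc 0 t) := by
    rw [← measure_sdiff_null (convPow_Iio_zero hU0 j)]
    congr 1
    ext x
    simp [and_comm]
  have hfin : convPow (Ufull μ ξ) j (Icc 0 t) ≠ ∞ :=
    hIic ▸ convPow_Iic_ne_top hU0 (Ufull_Iic_ne_top hiid hpos) t j
  have hlinear : ∀ u, ENNReal.ofReal u ≤ ENNReal.ofReal m * Ufull μ ξ (Iic u) := fun u =>
    (ofReal_le_mul_Ufull_Iio hiid hpos hm u).trans (by gcongr; exact Iio_subset_Iic_self)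
  have hlower : ENNReal.ofReal (t ^ j / j.factorial) ≤
      ENNReal.ofReal m ^ j * convPow (Ufull μ ξ) j (Icc 0 t) :=
    hIic ▸ ofReal_pow_div_factorial_le_convPow_Iic hlinear j ht
  rw [ENNReal.ofReal_le_iff_le_toReal (by finiteness), ENNReal.toReal_mul, ENNReal.toReal_pow,
    ENNReal.toReal_ofReal hmpos.le] at hlower
  rw [← div_div, div_le_iff₀ (pow_pos hmpos j), mul_comm]
  exact hlower

/-- Lemma: lower bound for convolution powers of the renewal function.
Let `j ∈ ℕ` and `m = E ξ ∈ (0,∞)`.  Then `U_j(t) ≥ t^j/(j! m^j)` for all `t ≥ 0`, where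
`U_j = U^{*(j)}` is the `j`-fold Lebesgue–Stieltjes convolution of the renewal function
`U` with itself. -/
theorem Uj_lower_bound
    (μ : Measure Ω) [IsProbabilityMeasure μ] (ξ : ℕ → Ω → ℝ)
    (hiid : IIDseq μ ξ)
    (hpos : ∀ i, ∀ᵐ ω ∂μ, 0 < ξ i ω)
    (hm : Integrable (ξ 0) μ) (hmpos : 0 < ∫ ω, ξ 0 ω ∂μ)
    (j : ℕ) (hj : 1 ≤ j) (t : ℝ) (ht : 0 ≤ t) :
    t ^ j / ((Nat.factorial j : ℝ) * (∫ ω, ξ 0 ω ∂μ) ^ j) ≤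
      (convPow (Ufull μ ξ) j (Icc 0 t)).toReal :=
  Uj_lower_bound_general μ ξ hiid hpos hm hmpos j t ht

end IPRW
end
end

section
/- Let η be an almost surely positive random variable with E η^{1/2} < ∞, let (η_i)_{i∈ℕ} be independent copies of η and put R_j := η_1+⋯+η_j. Then, for each fixed j ∈ ℕ, lim_{t→∞} t^{−(j−1/2)} ∫_0^{t} ∫_0^{t_2} ⋯ ∫_0^{t_j} P(R_j > y) dy dt_j ⋯ dt_2 = 0 (the integral being the (j−1)-fold iterated integral of y ↦ P(R_j > y), i.e., ∫_0^{t} (t−y)^{j−1}/(j−1)! · P(R_j > y) dy). -/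
/-! Since `(t - y) ^ (j - 1) ≤ t ^ (j - 1)` on `[0, t]`, it suffices to show that
`t^{-1/2} ∫_0^t P(R_j > y) dy → 0`. By the layer-cake formula this integral is
`E min(R_j, t)`, and `min(R_j, t) / √t` tends to `0` pointwise and is dominated by
`√R_j ≤ ∑ √η_i`, which is integrable; dominated convergence concludes. -/

open MeasureTheory ProbabilityTheory Filter Topology Set Asymptotics
open scoped ENNReal NNReal

noncomputable section

namespace IPRW

variable {Ω : Type*} [MeasurableSpace Ω]

lemma sqrt_sum_le_sum_sqrt {ι : Type*} (s : Finset ι) {f : ι → ℝ}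
    (hf : ∀ i ∈ s, 0 ≤ f i) :
    √(∑ i ∈ s, f i) ≤ ∑ i ∈ s, √(f i) := by
  classical
  induction s using Finset.induction_on with
  | empty => simp
  | insert a s ha ih =>
    rw [Finset.sum_insert ha, Finset.sum_insert ha]
    rw [Finset.forall_mem_insert] at hf
    calc √(f a + ∑ i ∈ s, f i) ≤ √(f a) + √(∑ i ∈ s, f i) := by
          simpa only [Real.sqrt_eq_rpow] using
            Real.rpow_add_le_add_rpow hf.1 (Finset.sum_nonneg hf.2) (by norm_num) (by norm_num)
      _ ≤ √(f a) + ∑ i ∈ s, √(f i) := by gcongr; exact ih hf.2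

lemma min_div_sqrt_le_sqrt {x t : ℝ} (hx : 0 ≤ x) (ht : 0 < t) : min x t / √t ≤ √x := by
  have hm : 0 ≤ min x t := le_min hx ht.le
  calc min x t / √t = √(min x t) * (√(min x t) / √t) := by
        rw [mul_div_assoc', Real.mul_self_sqrt hm]
    _ ≤ √x * 1 := by
        gcongr
        · exact min_le_left _ _
        · exact div_le_one_of_le₀ (Real.sqrt_le_sqrt (min_le_right _ _)) (Real.sqrt_nonneg _)
    _ = √x := mul_one _

lemma intervalIntegral_sub_pow_div_factorial_mul_le {f : ℝ → ℝ} {t : ℝ} (ht : 0 ≤ t)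
    (hf : IntervalIntegrable f volume 0 t) (hf0 : ∀ y ∈ Icc 0 t, 0 ≤ f y) (n : ℕ) :
    ∫ y in 0..t, (t - y) ^ n / n.factorial * f y ≤
      t ^ n / n.factorial * ∫ y in 0..t, f y := by
  rw [← intervalIntegral.integral_const_mul]
  refine intervalIntegral.integral_mono_on ht
    (hf.continuousOn_mul (by fun_prop)) (hf.const_mul _) fun y hy => ?_
  gcongr
  · exact hf0 y hy
  · linarith [hy.2]
  · linarith [hy.1]

section

variable {μ : Measure Ω}

lemma integrable_sqrt_finset_sum {ι : Type*} {s : Finset ι} {X : ι → Ω → ℝ}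
    (hX : ∀ i ∈ s, AEMeasurable (X i) μ) (hX0 : ∀ i ∈ s, 0 ≤ᵐ[μ] X i)
    (hint : ∀ i ∈ s, Integrable (fun a => √(X i a)) μ) :
    Integrable (fun a => √(∑ i ∈ s, X i a)) μ := by
  refine (integrable_finsetSum s hint).mono
    (Finset.aemeasurable_fun_sum s hX).sqrt.aestronglyMeasurable ?_
  filter_upwards [(eventually_all_finset s).2 hX0] with a ha
  rw [Real.norm_of_nonneg (Real.sqrt_nonneg _),
    Real.norm_of_nonneg (Finset.sum_nonneg fun i _ => Real.sqrt_nonneg _)]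
  exact sqrt_sum_le_sum_sqrt s ha

lemma tendsto_integral_min_div_sqrt_atTop {X : Ω → ℝ} (hX : AEMeasurable X μ)
    (hX0 : 0 ≤ᵐ[μ] X) (hint : Integrable (fun a => √(X a)) μ) :
    Tendsto (fun t => (∫ a, min (X a) t ∂μ) / √t) atTop (𝓝 0) := by
  simp_rw [← integral_div]
  have hlim := tendsto_integral_filter_of_dominated_convergence (μ := μ) (l := atTop)
    (F := fun t a => min (X a) t / √t) (f := fun _ => 0) (fun a => √(X a))
    (Eventually.of_forall fun t => ((hX.min aemeasurable_const).div_const _).aestronglyMeasurable)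
    ?_ hint ?_
  · simpa using hlim
  · filter_upwards [eventually_gt_atTop 0] with t ht
    filter_upwards [hX0] with a ha
    rw [Real.norm_of_nonneg (div_nonneg (le_min ha ht.le) (Real.sqrt_nonneg _))]
    exact min_div_sqrt_le_sqrt ha ht
  · refine Eventually.of_forall fun a => ?_
    refine ((tendsto_const_nhds (x := X a)).div_atTop Real.tendsto_sqrt_atTop).congr' ?_
    filter_upwards [eventually_ge_atTop (X a)] with t ht
    rw [min_eq_left ht]

lemma intervalIntegral_measureReal_lt_eq_integral_min [IsFiniteMeasure μ] {X : Ω → ℝ}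
    (hX : AEMeasurable X μ) (hX0 : 0 ≤ᵐ[μ] X) {t : ℝ} (ht : 0 ≤ t) :
    ∫ s in 0..t, μ.real {a | s < X a} = ∫ a, min (X a) t ∂μ := by
  have hmin0 : 0 ≤ᵐ[μ] fun a => min (X a) t := hX0.mono fun a ha => le_min ha ht
  have hmin : Integrable (fun a => min (X a) t) μ :=
    (integrable_const t).mono' (hX.min aemeasurable_const).aestronglyMeasurable
      (hmin0.mono fun a ha => by rw [Real.norm_of_nonneg ha]; exact min_le_right _ _)
  rw [hmin.integral_eq_integral_meas_lt hmin0, intervalIntegral.integral_of_le ht,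
    integral_Ioc_eq_integral_Ioo, setIntegral_eq_of_subset_of_forall_sdiff_eq_zero
      measurableSet_Ioi Ioo_subset_Ioi_self]
  · refine setIntegral_congr_fun measurableSet_Ioo fun s hs => ?_
    simp only [lt_min_iff, hs.2, and_true]
  · rintro s ⟨hs0, hst⟩
    have hts : t ≤ s := le_of_not_gt fun h => hst ⟨hs0, h⟩
    simp [not_lt.2 hts]

lemma tendsto_intervalIntegral_tail_div_sqrt_atTop [IsFiniteMeasure μ] {X : Ω → ℝ}
    (hX : AEMeasurable X μ) (hX0 : 0 ≤ᵐ[μ] X) (hint : Integrable (fun a => √(X a)) μ) :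
    Tendsto (fun t => (∫ y in 0..t, μ.real {a | y < X a}) / √t) atTop (𝓝 0) :=
  (tendsto_integral_min_div_sqrt_atTop hX hX0 hint).congr' <| by
    filter_upwards [eventually_ge_atTop 0] with t ht
    rw [intervalIntegral_measureReal_lt_eq_integral_min hX hX0 ht]

lemma tendsto_intervalIntegral_sub_pow_mul_tail_div_rpow_atTop [IsFiniteMeasure μ]
    {X : Ω → ℝ} (hX : AEMeasurable X μ) (hX0 : 0 ≤ᵐ[μ] X)
    (hint : Integrable (fun a => √(X a)) μ) (n : ℕ) :
    Tendsto (fun t => (∫ y in 0..t, (t - y) ^ n / n.factorial * μ.real {a | y < X a}) /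
      t ^ ((n : ℝ) + 1 / 2)) atTop (𝓝 0) := by
  set tail : ℝ → ℝ := fun y => μ.real {a | y < X a}
  have htail_anti : Antitone tail := fun y z hyz =>
    measureReal_mono fun a ha => lt_of_le_of_lt hyz ha
  have hlim := (tendsto_intervalIntegral_tail_div_sqrt_atTop hX hX0 hint).const_mul
    (n.factorial : ℝ)⁻¹
  rw [mul_zero] at hlim
  refine tendsto_of_tendsto_of_tendsto_of_le_of_le' tendsto_const_nhds hlim ?_ ?_
  · filter_upwards [eventually_ge_atTop 0] with t ht
    refine div_nonneg (intervalIntegral.integral_nonneg ht fun y hy => ?_) (by positivity)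
    have : 0 ≤ t - y := by linarith [hy.2]
    positivity
  · filter_upwards [eventually_gt_atTop 0] with t ht
    have hpow : t ^ ((n : ℝ) + 1 / 2) = t ^ n * √t := by
      rw [Real.rpow_add ht, Real.rpow_natCast, Real.sqrt_eq_rpow]
    calc (∫ y in 0..t, (t - y) ^ n / n.factorial * tail y) / t ^ ((n : ℝ) + 1 / 2)
        ≤ (t ^ n / n.factorial * ∫ y in 0..t, tail y) / (t ^ n * √t) := by
          rw [hpow]
          gcongr
          exact intervalIntegral_sub_pow_div_factorial_mul_le ht.le
            htail_anti.intervalIntegrable (fun y _ => measureReal_nonneg) n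
      _ = (n.factorial : ℝ)⁻¹ * ((∫ y in 0..t, tail y) / √t) := by
          field_simp

end

/-- Let `η` be a.s. positive with `E η^{1/2} < ∞`, `(η_i)` i.i.d. copies
of `η` and `R_j = η_1 + ⋯ + η_j`.  Then, for each fixed `j ∈ ℕ`,
`lim_{t→∞} t^{-(j-1/2)} ∫_0^t ((t-y)^{j-1}/(j-1)!) P(R_j > y) dy = 0`. -/
theorem iterated_tail_integral
    (μ : Measure Ω) [IsProbabilityMeasure μ] (η : ℕ → Ω → ℝ)
    (hiid : IIDseq μ η)
    (hpos : ∀ i, ∀ᵐ ω ∂μ, 0 < η i ω)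
    (hhalf : Integrable (fun ω => Real.sqrt (η 0 ω)) μ)
    (j : ℕ) (hj : 1 ≤ j) :
    Tendsto
      (fun t : ℝ =>
        (∫ y in (0 : ℝ)..t,
          (t - y) ^ (j - 1) / (Nat.factorial (j - 1) : ℝ) *
            (μ {ω | y < ∑ i ∈ Finset.range j, η i ω}).toReal) /
          t ^ ((j : ℝ) - 1 / 2))
      atTop (𝓝 0) := by
  obtain ⟨hmeas, -, hident⟩ := hiid
  obtain ⟨n, rfl⟩ := Nat.exists_eq_add_of_le' hj
  have hη0 : ∀ i, 0 ≤ᵐ[μ] η i := fun i => (hpos i).mono fun _ h => h.le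
  have hsqrt : ∀ i, Integrable (fun ω => √(η i ω)) μ := fun i =>
    ((hident i).comp Real.continuous_sqrt.measurable).integrable_iff.2 hhalf
  have hsum0 : 0 ≤ᵐ[μ] fun ω => ∑ i ∈ Finset.range (n + 1), η i ω := by
    filter_upwards [ae_all_iff.2 hη0] with ω hω
    exact Finset.sum_nonneg fun i _ => hω i
  have hlim := tendsto_intervalIntegral_sub_pow_mul_tail_div_rpow_atTop
    (Finset.aemeasurable_fun_sum _ fun i _ => (hmeas i).aemeasurable) hsum0
    (integrable_sqrt_finset_sum (fun i _ => (hmeas i).aemeasurable) (fun i _ => hη0 i)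
      fun i _ => hsqrt i) n
  have hexp : ((n + 1 : ℕ) : ℝ) - 1 / 2 = n + 1 / 2 := by push_cast; ring
  simpa only [Nat.add_sub_cancel, hexp, measureReal_def] using hlim

end IPRW
end
end
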